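/- arXiv:1101.4894 — 7 statements merged into one kernel-verified Lean document; each statement's English description precedes it below -/
import Mathlib

section
/- The generalized Bessel polynomials satisfy the three-term recurrence A_n Y_{n+2}^\mu(z) = B_n Y_{n+1}^\mu(z) + C_n Y_n^\mu(z), where A_n = 2(2n+\mu+2)(n+\mu+2), B_n = (2n+\mu+3)(2\mu + z(2n+\mu+4)(2n+\mu+2)), and C_n = 2(n+1)(2n+\mu+4). -/
open Finset

/-- Generalized Bessel polynomial `Y_n^μ(z)`. -/
noncomputable def genBessel (n : ℕ) (μ z : ℂ) : ℂ :=
  ∑ k ∈ Finset.range (n + 1),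
    (n.choose k : ℂ) * (ascPochhammer ℂ k).eval ((n : ℂ) + μ + 1) * (z / 2) ^ k

/-- Left-splitting rule for the ascending Pochhammer evaluation. -/
lemma ascPochhammer_eval_succ' (m : ℕ) (y : ℂ) :
    (ascPochhammer ℂ (m + 1)).eval y = y * (ascPochhammer ℂ m).eval (y + 1) := by
  induction m with
  | zero => simp
  | succ m ih =>
      rw [ascPochhammer_succ_eval, ih, ascPochhammer_succ_eval]
      push_cast
      ring

/-- Auxiliary shifted summand for `z * genBessel (n+1) μ z`. -/
noncomputable def Gaux (n : ℕ) (μ z : ℂ) : ℕ → ℂ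
  | 0 => 0
  | (j + 1) => 2 * ((n + 1).choose j : ℂ) *
      (ascPochhammer ℂ j).eval (((n + 1 : ℕ) : ℂ) + μ + 1) * (z / 2) ^ (j + 1)

/-- The key coefficient identity, for coefficients of index `j+2`. -/
lemma genBessel_key (x t : ℂ) (n j : ℕ) :
    2 * (x + n + 1) * (x + 1) *
        (((n + 2).choose (j + 2) : ℂ) * (ascPochhammer ℂ (j + 2)).eval (x + 2) * t ^ (j + 2)) =
      (x + n + 2) * (2 * (x - n - 1)) *
          (((n + 1).choose (j + 2) : ℂ) * (ascPochhammer ℂ (j + 2)).eval (x + 1) * t ^ (j + 2)) +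
        (x + n + 2) * ((x + n + 3) * (x + n + 1)) *
          (2 * ((n + 1).choose (j + 1) : ℂ) * (ascPochhammer ℂ (j + 1)).eval (x + 1) * t ^ (j + 2)) +
        2 * ((n : ℂ) + 1) * (x + n + 3) *
          ((n.choose (j + 2) : ℂ) * (ascPochhammer ℂ (j + 2)).eval x * t ^ (j + 2)) := by
  have h1 : ((n : ℂ) + 1) * (n.choose j : ℂ) =
      ((j : ℂ) + 1) * ((n.choose j : ℂ) + (n.choose (j + 1) : ℂ)) := by
    have h := Nat.add_one_mul_choose_eq n j
    rw [Nat.choose_succ_succ] at h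
    have h' := congrArg (fun m : ℕ => (m : ℂ)) h
    push_cast at h'
    linear_combination h'
  have h2 : ((n : ℂ) + 1) * (n.choose (j + 1) : ℂ) =
      ((j : ℂ) + 2) * ((n.choose (j + 1) : ℂ) + (n.choose (j + 2) : ℂ)) := by
    have h := Nat.add_one_mul_choose_eq n (j + 1)
    rw [Nat.choose_succ_succ] at h
    have h' := congrArg (fun m : ℕ => (m : ℂ)) h
    push_cast at h'
    linear_combination h'
  have p1 : (ascPochhammer ℂ (j + 2)).eval (x + 2) =
      (ascPochhammer ℂ j).eval (x + 2) * (x + 2 + j) * (x + 2 + j + 1) := by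
    rw [show j + 2 = (j + 1) + 1 from rfl, ascPochhammer_succ_eval, ascPochhammer_succ_eval]
    push_cast
    ring
  have p2 : (ascPochhammer ℂ (j + 2)).eval (x + 1) =
      (x + 1) * ((ascPochhammer ℂ j).eval (x + 2) * (x + 2 + j)) := by
    rw [show j + 2 = (j + 1) + 1 from rfl, ascPochhammer_eval_succ',
      show x + 1 + 1 = x + 2 by ring, ascPochhammer_succ_eval]
  have p3 : (ascPochhammer ℂ (j + 1)).eval (x + 1) =
      (x + 1) * (ascPochhammer ℂ j).eval (x + 2) := by
    rw [ascPochhammer_eval_succ', show x + 1 + 1 = x + 2 by ring]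
  have p4 : (ascPochhammer ℂ (j + 2)).eval x =
      x * ((x + 1) * (ascPochhammer ℂ j).eval (x + 2)) := by
    rw [show j + 2 = (j + 1) + 1 from rfl, ascPochhammer_eval_succ',
      ascPochhammer_eval_succ' j (x + 1), show x + 1 + 1 = x + 2 by ring]
  rw [p1, p2, p3, p4]
  simp only [Nat.choose_succ_succ]
  push_cast
  linear_combination
    (2 * (x + 1) * ((ascPochhammer ℂ j).eval (x + 2)) * t ^ (j + 2)) *
      ((-(x + n + 1) * (2 * x + j + n + 5)) * h1 +
        (-(x + n + 1) * (2 * x + j + n + 5) + x * (x + n + 3)) * h2)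

theorem genBessel_recurrence_n (n : ℕ) (μ z : ℂ) :
    2 * (2 * n + μ + 2) * ((n : ℂ) + μ + 2) * genBessel (n + 2) μ z =
      (2 * n + μ + 3) * (2 * μ + z * (2 * n + μ + 4) * (2 * n + μ + 2)) *
          genBessel (n + 1) μ z +
        2 * ((n : ℂ) + 1) * (2 * n + μ + 4) * genBessel n μ z := by
  have hpad : ∀ m N : ℕ, m < N → genBessel m μ z =
      ∑ k ∈ Finset.range N,
        (m.choose k : ℂ) * (ascPochhammer ℂ k).eval ((m : ℂ) + μ + 1) * (z / 2) ^ k := by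
    intro m N h
    unfold genBessel
    refine Finset.sum_subset (Finset.range_subset_range.mpr h) ?_
    intro k hk hk'
    have hmk : m < k := by
      simp only [Finset.mem_range] at hk'
      omega
    simp [Nat.choose_eq_zero_of_lt hmk]
  have hz : z * genBessel (n + 1) μ z = ∑ k ∈ Finset.range (n + 3), Gaux n μ z k := by
    rw [show n + 3 = n + 2 + 1 from rfl, Finset.sum_range_succ']
    simp only [Gaux]
    rw [add_zero]
    unfold genBessel
    rw [Finset.mul_sum]
    refine Finset.sum_congr rfl fun k hk => ?_
    ring
  have hsplit : (2 * (n : ℂ) + μ + 3) * (2 * μ + z * (2 * n + μ + 4) * (2 * n + μ + 2)) *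
      genBessel (n + 1) μ z =
      (2 * (n : ℂ) + μ + 3) * (2 * μ) * genBessel (n + 1) μ z +
        (2 * (n : ℂ) + μ + 3) * ((2 * n + μ + 4) * (2 * n + μ + 2)) *
          (z * genBessel (n + 1) μ z) := by ring
  rw [hsplit, hz, hpad (n + 2) (n + 3) (by omega), hpad (n + 1) (n + 3) (by omega),
    hpad n (n + 3) (by omega)]
  simp only [Finset.mul_sum]
  rw [← Finset.sum_add_distrib, ← Finset.sum_add_distrib]
  refine Finset.sum_congr rfl fun k hk => ?_
  rcases k with _ | _ | j
  · simp only [Gaux]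
    simp
    ring
  · simp only [Gaux]
    simp [ascPochhammer_one]
    ring
  · simp only [Gaux]
    have q2 : ((n + 2 : ℕ) : ℂ) + μ + 1 = ((n : ℂ) + μ + 1) + 2 := by push_cast; ring
    have q1 : ((n + 1 : ℕ) : ℂ) + μ + 1 = ((n : ℂ) + μ + 1) + 1 := by push_cast; ring
    rw [q2, q1]
    linear_combination genBessel_key ((n : ℂ) + μ + 1) (z / 2) n j
end

section
/- For z \ne 0, the generalized Bessel polynomials satisfy the recurrence in \mu: (n+\mu+2) Y_n^{\mu+2}(z) = (2n+\mu+2 - 2/z) Y_n^{\mu+1}(z) + (2/z) Y_n^\mu(z). -/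
/-!
With `b = n + μ + 2`, the three polynomials `Y_n^{μ+2}`, `Y_n^{μ+1}`, `Y_n^μ` carry the Pochhammer
symbols `(b+1)_k`, `(b)_k`, `(b-1)_k`. Termwise, `b (b+1)_k = (b+k) (b)_k` and
`(b-1)_k - (b)_k = -k (b)_{k-1}`; together with `C(n,k) (n-k) = n C(n-1,k)` these give
`b Y_n^{μ+2} - (b+n) Y_n^{μ+1} = -n Y_{n-1}^{μ+2}` and `Y_n^μ - Y_n^{μ+1} = -(z/2) n Y_{n-1}^{μ+2}`.
Dividing the second by `z/2` and eliminating `Y_{n-1}^{μ+2}` gives the recurrence.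
-/

open Finset

section Pochhammer

variable {R : Type*} [CommRing R]

theorem ascPochhammer_eval_succ_left (x : R) (k : ℕ) :
    (ascPochhammer R (k + 1)).eval x = x * (ascPochhammer R k).eval (x + 1) := by
  simp [ascPochhammer_succ_left, Polynomial.eval_comp]

theorem mul_ascPochhammer_eval_add_one (x : R) (k : ℕ) :
    x * (ascPochhammer R k).eval (x + 1) = (ascPochhammer R k).eval x * (x + k) := by
  rw [← ascPochhammer_eval_succ_left, ascPochhammer_succ_eval]

theorem ascPochhammer_eval_sub_one_sub (x : R) (k : ℕ) :
    (ascPochhammer R (k + 1)).eval (x - 1) - (ascPochhammer R (k + 1)).eval x =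
      -((k + 1) * (ascPochhammer R k).eval x) := by
  rw [ascPochhammer_eval_succ_left, sub_add_cancel, ascPochhammer_succ_eval]
  ring

end Pochhammer

theorem genBessel_zero (μ z : ℂ) : genBessel 0 μ z = 1 := by
  simp [genBessel]

theorem genBessel_succ_contiguous (n : ℕ) (μ z : ℂ) :
    ((n : ℂ) + μ + 3) * genBessel (n + 1) (μ + 2) z - (2 * n + μ + 4) * genBessel (n + 1) (μ + 1) z =
      -((n + 1) * genBessel n (μ + 2) z) := by
  set b : ℂ := n + μ + 3
  have hb₂ : ((n + 1 : ℕ) : ℂ) + (μ + 2) + 1 = b + 1 := by push_cast; ring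
  have hb₁ : ((n + 1 : ℕ) : ℂ) + (μ + 1) + 1 = b := by push_cast; ring
  have hb₀ : (n : ℂ) + (μ + 2) + 1 = b := by ring
  simp only [genBessel, hb₂, hb₁, hb₀, mul_sum, ← sum_sub_distrib]
  rw [sum_range_succ, ← sum_neg_distrib]
  have h_top : b * (ascPochhammer ℂ (n + 1)).eval (b + 1) =
      (2 * n + μ + 4) * (ascPochhammer ℂ (n + 1)).eval b := by
    rw [mul_ascPochhammer_eval_add_one]
    push_cast
    ring
  refine (add_eq_left.mpr ?_).trans (sum_congr rfl fun k hk => ?_)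
  · linear_combination (((n + 1).choose (n + 1) : ℂ) * (z / 2) ^ (n + 1)) * h_top
  · have hcoef : ((n + 1 : ℕ) : ℂ) * n.choose k = (n + 1).choose k * ((n + 1 : ℕ) - k : ℕ) := by
      exact_mod_cast (mul_comm _ _).trans (Nat.choose_mul_succ_eq n k)
    rw [Nat.cast_sub (mem_range.mp hk).le] at hcoef
    push_cast at hcoef
    have hstep := mul_ascPochhammer_eval_add_one b k
    linear_combination (((n + 1).choose k : ℂ) * (z / 2) ^ k) * hstep
      + ((ascPochhammer ℂ k).eval b * (z / 2) ^ k) * hcoef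

theorem genBessel_succ_sub_genBessel_succ_add_one (n : ℕ) (μ z : ℂ) :
    genBessel (n + 1) μ z - genBessel (n + 1) (μ + 1) z =
      -(z / 2 * ((n + 1) * genBessel n (μ + 2) z)) := by
  set b : ℂ := n + μ + 3
  have hb₁ : ((n + 1 : ℕ) : ℂ) + μ + 1 = b - 1 := by push_cast; ring
  have hb₂ : ((n + 1 : ℕ) : ℂ) + (μ + 1) + 1 = b := by push_cast; ring
  have hb₀ : (n : ℂ) + (μ + 2) + 1 = b := by ring
  simp only [genBessel, hb₂, hb₁, hb₀, mul_sum, ← sum_sub_distrib]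
  rw [sum_range_succ', ← sum_neg_distrib]
  simp only [ascPochhammer_zero, Polynomial.eval_one, sub_self, add_zero]
  refine sum_congr rfl fun k _ => ?_
  have hcoef : ((n + 1 : ℕ) : ℂ) * n.choose k = (n + 1).choose (k + 1) * (k + 1) := by
    exact_mod_cast Nat.add_one_mul_choose_eq n k
  push_cast at hcoef
  have hstep := ascPochhammer_eval_sub_one_sub b k
  linear_combination (((n + 1).choose (k + 1) : ℂ) * (z / 2) ^ (k + 1)) * hstep
    + (z / 2 * (ascPochhammer ℂ k).eval b * (z / 2) ^ k) * hcoef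

theorem genBessel_recurrence_mu (n : ℕ) (μ z : ℂ) (hz : z ≠ 0) :
    ((n : ℂ) + μ + 2) * genBessel n (μ + 2) z =
      (2 * n + μ + 2 - 2 / z) * genBessel n (μ + 1) z + (2 / z) * genBessel n μ z := by
  cases n with
  | zero =>
    simp only [genBessel_zero]
    ring
  | succ n =>
    have h₁ := genBessel_succ_contiguous n μ z
    have h₂ := genBessel_succ_sub_genBessel_succ_add_one n μ z
    field_simp
    push_cast
    linear_combination z * h₁ - 2 * h₂
end

section
/- For z \ne 0, the derivative of the generalized Bessel polynomial satisfies d/dz Y_n^\mu(z) = ((n+\mu+1)/z) (Y_n^{\mu+1}(z) - Y_n^\mu(z)). -/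
open Finset

theorem mul_ascPochhammer_eval_add_one_sub {S : Type*} [CommRing S] (k : ℕ) (a : S) :
    a * ((ascPochhammer S k).eval (a + 1) - (ascPochhammer S k).eval a)
      = k * (ascPochhammer S k).eval a := by
  have h : a * (ascPochhammer S k).eval (a + 1) = (ascPochhammer S k).eval a * (a + k) := by
    rw [← ascPochhammer_succ_eval, ascPochhammer_succ_left]
    simp [Polynomial.eval_comp]
  linear_combination h

theorem natCast_mul_pow_sub_one_mul {R : Type*} [Semiring R] (k : ℕ) (x : R) :
    (k : R) * x ^ (k - 1) * x = k * x ^ k := by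
  rcases Nat.eq_zero_or_pos k with rfl | hk
  · simp
  · rw [mul_assoc, pow_sub_one_mul hk.ne']

theorem genBessel_add_one_sub (n : ℕ) (μ z : ℂ) :
    ((n : ℂ) + μ + 1) * (genBessel n (μ + 1) z - genBessel n μ z)
      = ∑ k ∈ range (n + 1),
          k * ((n.choose k : ℂ) * (ascPochhammer ℂ k).eval ((n : ℂ) + μ + 1) * (z / 2) ^ k) := by
  have ha : (n : ℂ) + (μ + 1) + 1 = (n : ℂ) + μ + 1 + 1 := by ring
  rw [genBessel, genBessel, ha, ← sum_sub_distrib, mul_sum]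
  refine sum_congr rfl fun k _ => ?_
  linear_combination ((n.choose k : ℂ) * (z / 2) ^ k) *
    mul_ascPochhammer_eval_add_one_sub k ((n : ℂ) + μ + 1)

theorem hasDerivAt_genBessel (n : ℕ) (μ z : ℂ) :
    HasDerivAt (genBessel n μ)
      ((∑ k ∈ range (n + 1), (n.choose k : ℂ) * (ascPochhammer ℂ k).eval ((n : ℂ) + μ + 1)
          * (k * (z / 2) ^ (k - 1))) / 2) z := by
  rw [sum_div]
  refine HasDerivAt.fun_sum fun k _ => ?_
  refine ((((hasDerivAt_id' z).div_const 2).fun_pow k).const_mul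
    ((n.choose k : ℂ) * (ascPochhammer ℂ k).eval ((n : ℂ) + μ + 1))).congr_deriv ?_
  ring

theorem genBessel_hasDerivAt_diff (n : ℕ) (μ z : ℂ) (hz : z ≠ 0) :
    HasDerivAt (fun w => genBessel n μ w)
      ((((n : ℂ) + μ + 1) / z) * (genBessel n (μ + 1) z - genBessel n μ z)) z := by
  convert hasDerivAt_genBessel n μ z using 1
  rw [div_mul_eq_mul_div, genBessel_add_one_sub, div_eq_iff hz,
    show ∀ s : ℂ, s / 2 * z = s * (z / 2) from fun s => by ring, sum_mul]
  refine sum_congr rfl fun k _ => ?_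
  rw [mul_assoc _ _ (z / 2), natCast_mul_pow_sub_one_mul]
  ring
end

section
/- For Re(z) > 0, Y_n^\mu(1/z) = (2z)^{n+\mu+1} U(n+\mu+1, 2n+\mu+2, 2z), where U is the Tricomi confluent hypergeometric function given by U(a,c,w) = (1/\Gamma(a)) \int_0^\infty t^{a-1} (1+t)^{c-a-1} e^{-wt} dt for Re(a), Re(w) > 0. -/
open Finset

/-- Tricomi confluent hypergeometric function `U(a,c,w)`, defined by its
integral representation, valid for `Re a > 0`, `Re w > 0`. -/
noncomputable def tricomiU (a c w : ℂ) : ℂ :=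
  (1 / Complex.Gamma a) *
    ∫ t in Set.Ioi (0 : ℝ),
      (t : ℂ) ^ (a - 1) * ((1 : ℂ) + t) ^ (c - a - 1) * Complex.exp (-w * t)

/-! Expanding `(1 + t) ^ n` binomially turns `U(a, a + n + 1, w)` into a finite sum of Laplace
integrals `∫ t ^ (a + k - 1) e^(-w t) dt = Γ(a + k) w ^ (-a - k)`, and `Γ(a + k) = (a)_k Γ(a)`.
The Laplace integral is classical for real `w > 0`; both sides are holomorphic on `Re w > 0`, so
the identity theorem extends it there. With `a = n + μ + 1` and `w = 2z`, the sum is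
`(2z) ^ (-a) Y_n^μ(1/z)`. -/

open Finset MeasureTheory Set Complex Filter Metric Topology

lemma norm_cpow_mul_cexp_neg_mul (s w : ℂ) {t : ℝ} (ht : 0 < t) :
    ‖(t : ℂ) ^ s * cexp (-w * t)‖ = t ^ s.re * Real.exp (-w.re * t) := by
  rw [norm_mul, norm_cpow_eq_rpow_re_of_pos ht, norm_exp]
  simp

lemma continuousOn_cpow_mul_cexp_neg_mul (s w : ℂ) :
    ContinuousOn (fun t : ℝ => (t : ℂ) ^ s * cexp (-w * t)) (Ioi 0) := by
  refine ContinuousOn.mul (fun t ht => ?_) (by fun_prop)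
  exact (continuousAt_ofReal_cpow_const t s (Or.inr (ne_of_gt ht))).continuousWithinAt

lemma integrableOn_cpow_mul_cexp_neg_mul {s w : ℂ} (hs : -1 < s.re) (hw : 0 < w.re) :
    IntegrableOn (fun t : ℝ => (t : ℂ) ^ s * cexp (-w * t)) (Ioi 0) := by
  have hreal : IntegrableOn (fun t : ℝ => t ^ s.re * Real.exp (-w.re * t)) (Ioi 0) := by
    simpa using integrableOn_rpow_mul_exp_neg_mul_rpow hs zero_lt_one hw
  refine hreal.mono' ((continuousOn_cpow_mul_cexp_neg_mul s w).aestronglyMeasurable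
    measurableSet_Ioi) ?_
  filter_upwards [ae_restrict_mem measurableSet_Ioi] with t ht
  exact (norm_cpow_mul_cexp_neg_mul s w ht).le

lemma hasDerivAt_cpow_mul_cexp_neg_mul (s w : ℂ) {t : ℝ} (ht : 0 < t) :
    HasDerivAt (fun w : ℂ => (t : ℂ) ^ s * cexp (-w * t))
      (-((t : ℂ) ^ (s + 1) * cexp (-w * t))) w := by
  have hexp : HasDerivAt (fun w : ℂ => cexp (-w * t)) (cexp (-w * t) * -t) w := by
    simpa using ((hasDerivAt_id w).neg.mul_const (t : ℂ)).cexp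
  rw [cpow_add _ _ (ofReal_ne_zero.mpr ht.ne'), cpow_one,
    show -((t : ℂ) ^ s * t * cexp (-w * t)) = (t : ℂ) ^ s * (cexp (-w * t) * -t) by ring]
  exact hexp.const_mul _

lemma differentiableAt_integral_cpow_mul_cexp_neg_mul {s w₀ : ℂ} (hs : -1 < s.re)
    (hw₀ : 0 < w₀.re) :
    DifferentiableAt ℂ (fun w : ℂ => ∫ t in Ioi (0 : ℝ), (t : ℂ) ^ s * cexp (-w * t))
      w₀ := by
  set ε := w₀.re / 2 with hε_def
  have hε : 0 < ε := by positivity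
  have hre : ∀ w ∈ ball w₀ ε, ε < w.re := fun w hw => by
    have := (abs_re_le_norm (w - w₀)).trans_lt (mem_ball_iff_norm.mp hw)
    rw [sub_re, abs_lt] at this
    linarith [this.1]
  have hbound : ∀ᵐ t : ℝ ∂volume.restrict (Ioi 0), ∀ w ∈ ball w₀ ε,
      ‖-((t : ℂ) ^ (s + 1) * cexp (-w * t))‖ ≤ ‖(t : ℂ) ^ (s + 1) * cexp (-ε * t)‖ := by
    filter_upwards [ae_restrict_mem measurableSet_Ioi] with t ht w hw
    rw [norm_neg, norm_cpow_mul_cexp_neg_mul _ _ ht, norm_cpow_mul_cexp_neg_mul _ _ ht, ofReal_re]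
    exact mul_le_mul_of_nonneg_left
      (Real.exp_le_exp.mpr (by nlinarith [hre w hw, mem_Ioi.mp ht]))
      (Real.rpow_nonneg (le_of_lt ht) _)
  have hbound_int : IntegrableOn (fun t : ℝ => ‖(t : ℂ) ^ (s + 1) * cexp (-ε * t)‖) (Ioi 0) :=
    (integrableOn_cpow_mul_cexp_neg_mul (by simp only [add_re, one_re]; linarith)
      (by simpa)).norm
  have hderiv : ∀ᵐ t : ℝ ∂volume.restrict (Ioi 0), ∀ w ∈ ball w₀ ε,
      HasDerivAt (fun w : ℂ => (t : ℂ) ^ s * cexp (-w * t))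
        (-((t : ℂ) ^ (s + 1) * cexp (-w * t))) w := by
    filter_upwards [ae_restrict_mem measurableSet_Ioi] with t ht w _
    exact hasDerivAt_cpow_mul_cexp_neg_mul s w ht
  exact (hasDerivAt_integral_of_dominated_loc_of_deriv_le
    (F' := fun w (t : ℝ) => -((t : ℂ) ^ (s + 1) * cexp (-w * t))) (ball_mem_nhds w₀ hε)
    (Eventually.of_forall fun w =>
      (continuousOn_cpow_mul_cexp_neg_mul s w).aestronglyMeasurable measurableSet_Ioi)
    (integrableOn_cpow_mul_cexp_neg_mul hs hw₀)
    ((continuousOn_cpow_mul_cexp_neg_mul (s + 1) w₀).aestronglyMeasurable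
      measurableSet_Ioi).neg
    hbound hbound_int hderiv).2.differentiableAt

theorem integral_cpow_mul_cexp_neg_mul_Ioi {a w : ℂ} (ha : 0 < a.re) (hw : 0 < w.re) :
    ∫ t in Ioi (0 : ℝ), (t : ℂ) ^ (a - 1) * cexp (-w * t) = w ^ (-a) * Gamma a := by
  have hU : IsOpen {w : ℂ | 0 < w.re} := isOpen_lt continuous_const continuous_re
  have hreal : ∀ r : ℝ, 0 < r →
      ∫ t in Ioi (0 : ℝ), (t : ℂ) ^ (a - 1) * cexp (-r * t) = (r : ℂ) ^ (-a) * Gamma a := by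
    intro r hr
    simp_rw [neg_mul]
    rw [integral_cpow_mul_exp_neg_mul_Ioi ha hr, one_div, inv_cpow_ofReal_nonneg hr.le, cpow_neg]
  have hto : Tendsto ofReal (𝓝[>] 1) (𝓝[≠] (1 : ℂ)) :=
    tendsto_nhdsWithin_iff.mpr
      ⟨(continuous_ofReal.tendsto' 1 1 ofReal_one).mono_left nhdsWithin_le_nhds,
        eventually_mem_nhdsWithin.mono fun r hr => by
          simpa [← ofReal_one, ofReal_inj] using (mem_Ioi.mp hr).ne'⟩
  refine AnalyticOnNhd.eqOn_of_preconnected_of_frequently_eq (z₀ := 1)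
    (f := fun w => ∫ t in Ioi (0 : ℝ), (t : ℂ) ^ (a - 1) * cexp (-w * t))
    (g := fun w => w ^ (-a) * Gamma a) ?_ ?_
    (convex_halfSpace_re_gt 0).isPreconnected (by simp) ?_ hw
  · exact DifferentiableOn.analyticOnNhd (fun w hw =>
      (differentiableAt_integral_cpow_mul_cexp_neg_mul (by simpa using ha)
        hw).differentiableWithinAt) hU
  · exact DifferentiableOn.analyticOnNhd (fun w hw =>
      ((differentiableAt_id.cpow_const (Or.inl hw)).mul_const _).differentiableWithinAt) hU
  · have hnear : ∀ᶠ r : ℝ in 𝓝[>] 1, ∫ t in Ioi (0 : ℝ), (t : ℂ) ^ (a - 1) * cexp (-(r : ℂ) * t) =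
        (r : ℂ) ^ (-a) * Gamma a :=
      eventually_mem_nhdsWithin.mono fun r hr => hreal r (one_pos.trans hr)
    exact hto.frequently hnear.frequently

lemma cpow_sub_one_mul_one_add_pow {x : ℂ} (hx : x ≠ 0) (a : ℂ) (n : ℕ) :
    x ^ (a - 1) * (1 + x) ^ n = ∑ k ∈ range (n + 1), (n.choose k : ℂ) * x ^ (a + k - 1) := by
  rw [add_comm 1 x, add_pow, mul_sum]
  refine sum_congr rfl fun k _ => ?_
  rw [one_pow, mul_one, show a + k - 1 = a - 1 + k by ring, cpow_add _ _ hx, cpow_natCast]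
  ring

lemma integral_cpow_add_nat_mul_cexp_neg_mul_Ioi {a w : ℂ} (ha : 0 < a.re) (hw : 0 < w.re)
    (k : ℕ) :
    ∫ t in Ioi (0 : ℝ), (t : ℂ) ^ (a + k - 1) * cexp (-w * t) =
      (ascPochhammer ℂ k).eval a * Gamma a * w ^ (-a) * w⁻¹ ^ k := by
  have hw0 : w ≠ 0 := fun h => by simp [h] at hw
  have hnonpole : ∀ m : ℕ, a ≠ -m := fun m h => by
    rw [h, neg_re, natCast_re] at ha
    linarith [m.cast_nonneg (α := ℝ)]
  have hak : 0 < (a + k).re := by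
    simp only [add_re, natCast_re]
    linarith
  rw [integral_cpow_mul_cexp_neg_mul_Ioi hak hw,
    ← Gamma_add_nat_div_Gamma_eq a hnonpole, neg_add, cpow_add _ _ hw0, cpow_neg w k,
    cpow_natCast, inv_pow]
  field_simp [Gamma_ne_zero hnonpole]

theorem tricomiU_add_nat_add_one {a w : ℂ} (ha : 0 < a.re) (hw : 0 < w.re) (n : ℕ) :
    tricomiU a (a + n + 1) w =
      w ^ (-a) *
        ∑ k ∈ range (n + 1), (n.choose k : ℂ) * (ascPochhammer ℂ k).eval a * w⁻¹ ^ k := by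
  have hexpand : ∀ t ∈ Ioi (0 : ℝ),
      (t : ℂ) ^ (a - 1) * (1 + t) ^ (n : ℂ) * cexp (-w * t) =
      ∑ k ∈ range (n + 1), (n.choose k : ℂ) * ((t : ℂ) ^ (a + k - 1) * cexp (-w * t)) :=
    fun t ht => by
      rw [cpow_natCast, cpow_sub_one_mul_one_add_pow (ofReal_ne_zero.mpr (ne_of_gt ht)), sum_mul]
      exact sum_congr rfl fun k _ => mul_assoc _ _ _
  have hint : ∀ k ∈ range (n + 1), IntegrableOn
      (fun t : ℝ => (n.choose k : ℂ) * ((t : ℂ) ^ (a + k - 1) * cexp (-w * t))) (Ioi 0) :=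
    fun k _ => (integrableOn_cpow_mul_cexp_neg_mul
      (by simp only [sub_re, add_re, natCast_re, one_re]; linarith) hw).const_mul _
  rw [tricomiU, show a + n + 1 - a - 1 = (n : ℂ) by ring,
    setIntegral_congr_fun measurableSet_Ioi hexpand, integral_finsetSum _ hint]
  simp_rw [integral_const_mul, integral_cpow_add_nat_mul_cexp_neg_mul_Ioi ha hw, mul_sum]
  refine sum_congr rfl fun k _ => ?_
  field_simp [Gamma_ne_zero_of_re_pos ha]

theorem genBessel_eq_tricomiU (n : ℕ) (μ z : ℂ) (hμ : -1 < μ.re) (hz : 0 < z.re) :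
    genBessel n μ (1 / z) =
      (2 * z) ^ ((n : ℂ) + μ + 1) *
        tricomiU ((n : ℂ) + μ + 1) (2 * n + μ + 2) (2 * z) := by
  have ha : 0 < ((n : ℂ) + μ + 1).re := by
    simp only [add_re, natCast_re, one_re]
    linarith [(n.cast_nonneg : (0 : ℝ) ≤ n)]
  have hw : 0 < (2 * z).re := by simpa using hz
  have h2z : 2 * z ≠ 0 := fun h => by simp [h] at hw
  rw [show (2 * n + μ + 2 : ℂ) = (n + μ + 1) + n + 1 by ring, tricomiU_add_nat_add_one ha hw,
    ← mul_assoc, ← cpow_add _ _ h2z, add_neg_cancel, cpow_zero, one_mul, genBessel]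
  refine sum_congr rfl fun k _ => ?_
  rw [show 1 / z / 2 = (2 * z)⁻¹ by ring]
end

section
/- The coefficients c_k = L_k^{-\mu-k}(1/z) satisfy the three-term recurrence z(k+1) c_{k+1} = -(\mu z + k z + 1) c_k - c_{k-1} for k \ge 1, with c_0 = 1 and c_1 = -(\mu z + 1)/z. -/
open Finset

/-- Generalized Laguerre polynomial
`L_n^α(x) = ∑_{m=0}^n ((α+m+1)_{n-m}/(n-m)!) (-x)^m / m!`. -/
noncomputable def genLaguerre (n : ℕ) (α x : ℂ) : ℂ :=
  ∑ m ∈ Finset.range (n + 1),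
    ((ascPochhammer ℂ (n - m)).eval (α + m + 1) / ((n - m).factorial : ℂ)) *
      (-x) ^ m / (m.factorial : ℂ)

lemma poch_step (j : ℕ) (a : ℂ) :
    (ascPochhammer ℂ (j+1)).eval a = a * (ascPochhammer ℂ j).eval (a+1) := by
  simp [ascPochhammer_succ_left, Polynomial.eval_comp]

lemma split3 (f : ℕ → ℂ) (n : ℕ) :
    ∑ m ∈ range (n+2+1), f m = f 0 + (∑ m ∈ range (n+1), f (m+1)) + f (n+2) := by
  rw [Finset.sum_range_succ, Finset.sum_range_succ']
  ring

lemma split_bot (f : ℕ → ℂ) (n : ℕ) :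
    ∑ m ∈ range (n+1+1), f m = f 0 + ∑ m ∈ range (n+1), f (m+1) := by
  rw [Finset.sum_range_succ']; ring

lemma term_zero (μ x : ℂ) (n m : ℕ) (hm : m ≤ n) :
    (↑n + 2) * (Polynomial.eval (-μ - (↑n + 2) + ↑(m + 1) + 1) (ascPochhammer ℂ (n + 2 - (m + 1))) /
        ↑(n + 2 - (m + 1)).factorial * (-x) ^ (m + 1) / ↑(m + 1).factorial)
    + (μ + (↑n + 1)) * (Polynomial.eval (-μ - (↑n + 1) + ↑(m + 1) + 1) (ascPochhammer ℂ (n + 1 - (m + 1))) /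
        ↑(n + 1 - (m + 1)).factorial * (-x) ^ (m + 1) / ↑(m + 1).factorial)
    + x * (Polynomial.eval (-μ - (↑n + 1) + ↑m + 1) (ascPochhammer ℂ (n + 1 - m)) /
        ↑(n + 1 - m).factorial * (-x) ^ m / ↑m.factorial)
    + x * (Polynomial.eval (-μ - ↑n + ↑m + 1) (ascPochhammer ℂ (n - m)) /
        ↑(n - m).factorial * (-x) ^ m / ↑m.factorial) = 0 := by
  obtain ⟨j, rfl⟩ : ∃ j, n = m + j := ⟨n - m, by omega⟩
  rw [show m + j + 2 - (m + 1) = j + 1 by omega,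
      show m + j + 1 - (m + 1) = j by omega,
      show m + j + 1 - m = j + 1 by omega,
      show m + j - m = j by omega]
  rw [show -μ - (((m+j:ℕ):ℂ) + 2) + ((m + 1:ℕ):ℂ) + 1 = -μ - (m:ℂ) - (j:ℂ) + m by push_cast; ring]
  rw [show -μ - (((m+j:ℕ):ℂ) + 1) + (m:ℂ) + 1 = -μ - (m:ℂ) - (j:ℂ) + m by push_cast; ring]
  rw [poch_step]
  rw [show -μ - (((m+j:ℕ):ℂ) + 1) + ((m + 1:ℕ):ℂ) + 1 = -μ - (m:ℂ) - (j:ℂ) + m + 1 by push_cast; ring]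
  rw [show -μ - ((m+j:ℕ):ℂ) + (m:ℂ) + 1 = -μ - (m:ℂ) - (j:ℂ) + m + 1 by push_cast; ring]
  generalize (Polynomial.eval (-μ - (m:ℂ) - (j:ℂ) + m + 1) (ascPochhammer ℂ j)) = P
  have hf1 : ((j + 1).factorial : ℂ) = (j + 1) * (j.factorial : ℂ) := by
    push_cast [Nat.factorial_succ]; ring
  have hf2 : ((m + 1).factorial : ℂ) = (m + 1) * (m.factorial : ℂ) := by
    push_cast [Nat.factorial_succ]; ring
  rw [hf1, hf2, pow_succ]
  have h3 : ((j:ℂ) + 1) ≠ 0 := Nat.cast_add_one_ne_zero j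
  have h4 : ((m:ℂ) + 1) ≠ 0 := Nat.cast_add_one_ne_zero m
  have hu : ((j:ℂ)+1)*((j:ℂ)+1)⁻¹ = 1 := mul_inv_cancel₀ h3
  have hv : ((m:ℂ)+1)*((m:ℂ)+1)⁻¹ = 1 := mul_inv_cancel₀ h4
  push_cast
  generalize (-x)^m = y
  simp only [div_eq_mul_inv, mul_inv]
  linear_combination (x*y*P/(j.factorial:ℂ)/(m.factorial:ℂ)*(μ+(j:ℂ))*((m:ℂ)+1)⁻¹) * hu
    + (x*y*P/(j.factorial:ℂ)/(m.factorial:ℂ)*((μ+(j:ℂ))*((j:ℂ)+1)⁻¹ - 1)) * hv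

lemma key (μ x : ℂ) (n : ℕ) :
    ((n:ℂ)+2) * genLaguerre (n+2) (-μ - ((n:ℂ)+2)) x
      + (μ + ((n:ℂ)+1)) * genLaguerre (n+1) (-μ - ((n:ℂ)+1)) x
      + x * genLaguerre (n+1) (-μ - ((n:ℂ)+1)) x
      + x * genLaguerre n (-μ - (n:ℂ)) x = 0 := by
  unfold genLaguerre
  rw [Finset.mul_sum, Finset.mul_sum, Finset.mul_sum, Finset.mul_sum]
  rw [split3, split_bot, Finset.sum_range_succ _ (n+1)]
  have hmain : ∑ m ∈ Finset.range (n + 1),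
      ((↑n + 2) *
          (Polynomial.eval (-μ - (↑n + 2) + ↑(m + 1) + 1) (ascPochhammer ℂ (n + 2 - (m + 1))) /
              ↑(n + 2 - (m + 1)).factorial * (-x) ^ (m + 1) / ↑(m + 1).factorial)
        + (μ + (↑n + 1)) *
          (Polynomial.eval (-μ - (↑n + 1) + ↑(m + 1) + 1) (ascPochhammer ℂ (n + 1 - (m + 1))) /
              ↑(n + 1 - (m + 1)).factorial * (-x) ^ (m + 1) / ↑(m + 1).factorial)
        + x *
          (Polynomial.eval (-μ - (↑n + 1) + ↑m + 1) (ascPochhammer ℂ (n + 1 - m)) /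
              ↑(n + 1 - m).factorial * (-x) ^ m / ↑m.factorial)
        + x *
          (Polynomial.eval (-μ - ↑n + ↑m + 1) (ascPochhammer ℂ (n - m)) /
              ↑(n - m).factorial * (-x) ^ m / ↑m.factorial)) = 0 :=
    Finset.sum_eq_zero fun m hm =>
      term_zero μ x n m (Nat.lt_succ_iff.mp (Finset.mem_range.mp hm))
  rw [Finset.sum_add_distrib, Finset.sum_add_distrib, Finset.sum_add_distrib] at hmain
  have hR : ((n:ℂ) + 2) ≠ 0 := by
    have h : ((n+2:ℕ):ℂ) ≠ 0 := Nat.cast_ne_zero.2 (by omega)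
    push_cast at h
    exact h
  have hu : ((n:ℂ)+2)*((n:ℂ)+2)⁻¹ = 1 := mul_inv_cancel₀ hR
  have h0 : (↑n + 2) *
        (Polynomial.eval (-μ - (↑n + 2) + ↑(0:ℕ) + 1) (ascPochhammer ℂ (n + 2 - 0)) /
            ↑(n + 2 - 0).factorial * (-x) ^ (0:ℕ) / ↑(Nat.factorial 0))
      + (μ + (↑n + 1)) *
        (Polynomial.eval (-μ - (↑n + 1) + ↑(0:ℕ) + 1) (ascPochhammer ℂ (n + 1 - 0)) /
            ↑(n + 1 - 0).factorial * (-x) ^ (0:ℕ) / ↑(Nat.factorial 0)) = 0 := by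
    simp only [Nat.sub_zero, Nat.cast_zero, pow_zero, Nat.factorial_zero, Nat.cast_one,
      add_zero]
    rw [show n + 2 = (n+1)+1 from rfl]
    rw [show -μ - ((n:ℂ) + 2) + 1 = -μ - (n:ℂ) - 1 by ring]
    rw [poch_step]
    rw [show -μ - (n:ℂ) - 1 + 1 = -μ - ((n:ℂ)+1) + 1 by ring]
    generalize Polynomial.eval (-μ - ((n:ℂ)+1) + 1) (ascPochhammer ℂ (n+1)) = P
    have hf : (((n+1)+1).factorial : ℂ) = ((n:ℂ) + 2) * ((n+1).factorial : ℂ) := by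
      rw [Nat.factorial_succ]; push_cast; ring
    rw [hf]
    have hD : (((n+1).factorial : ℂ)) ≠ 0 := Nat.cast_ne_zero.2 (Nat.factorial_ne_zero _)
    simp only [div_eq_mul_inv, mul_inv]
    linear_combination ((-μ - (n:ℂ) - 1) * P * (((n+1).factorial : ℂ))⁻¹) * hu
  have htop : (↑n + 2) *
        (Polynomial.eval (-μ - (↑n + 2) + ↑(n+2) + 1) (ascPochhammer ℂ (n + 2 - (n+2))) /
            ↑(n + 2 - (n+2)).factorial * (-x) ^ (n+2) / ↑(n + 2).factorial)
      + x *
        (Polynomial.eval (-μ - (↑n + 1) + ↑(n+1) + 1) (ascPochhammer ℂ (n + 1 - (n+1))) /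
            ↑(n + 1 - (n+1)).factorial * (-x) ^ (n+1) / ↑(n + 1).factorial) = 0 := by
    simp only [Nat.sub_self, ascPochhammer_zero, Polynomial.eval_one, Nat.factorial_zero,
      Nat.cast_one]
    rw [show n + 2 = (n+1)+1 from rfl, pow_succ]
    have hf : (((n+1)+1).factorial : ℂ) = ((n:ℂ) + 2) * ((n+1).factorial : ℂ) := by
      rw [Nat.factorial_succ]; push_cast; ring
    rw [hf]
    have hD : (((n+1).factorial : ℂ)) ≠ 0 := Nat.cast_ne_zero.2 (Nat.factorial_ne_zero _)
    simp only [div_eq_mul_inv, mul_inv]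
    linear_combination (-x * (-x)^(n+1) * (((n+1).factorial : ℂ))⁻¹) * hu
  linear_combination hmain + h0 + htop

theorem genLaguerre_coeff_recurrence (μ z : ℂ) (hz : z ≠ 0)
    (c : ℕ → ℂ) (hc : ∀ k, c k = genLaguerre k (-μ - k) (1 / z)) :
    c 0 = 1 ∧ c 1 = -(μ * z + 1) / z ∧
      ∀ k : ℕ, 1 ≤ k →
        z * ((k : ℂ) + 1) * c (k + 1) = -(μ * z + k * z + 1) * c k - c (k - 1) := by
  refine ⟨?_, ?_, ?_⟩
  · rw [hc 0]; simp [genLaguerre]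
  · rw [hc 1]
    unfold genLaguerre
    rw [Finset.sum_range_succ, Finset.sum_range_succ, Finset.sum_range_zero]
    simp [ascPochhammer_one]
    field_simp
    ring
  · intro k hk
    obtain ⟨n, rfl⟩ : ∃ n, k = n + 1 := ⟨k - 1, by omega⟩
    have h := key μ (1/z) n
    have hzi : z * z⁻¹ = 1 := mul_inv_cancel₀ hz
    rw [show n+1-1 = n from rfl, hc (n+1+1), hc (n+1), hc n,
        show n+1+1 = n+2 from rfl]
    push_cast
    linear_combination z * h
      - (genLaguerre (n+1) (-μ - ((n:ℂ)+1)) (1/z) + genLaguerre n (-μ - (n:ℂ)) (1/z)) * hzi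
end

section
/- The convergent series identity Y_n^0(z) = (2z)^n e^{1/z} \sum_{k=0}^\infty \frac{(-1)^k}{k! z^k} (\tfrac12 - \tfrac12 k)_n holds for all z \ne 0. -/
/-!
In the falling-factorial basis `x^(t)`, with `x = 1 - 2y`,
`4ⁿ (y)ₙ = ∑_{j+t=n} a(n,j) (-2)ᵗ x^(t)`, where `a(n,j) = C(n,j) (n+1)_j` are the coefficients
of `Yₙ⁰`: multiplying by `4(y+n) = 2(2n+1-x)` shifts the expansion exactly as the Bessel
recurrence `a(n+1,j+1) = a(n,j+1) + 2(n+j+1) a(n,j)` prescribes. Falling factorials act on the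
exponential series by `∑ₖ wᵏ/k! · k^(t) = wᵗ eʷ`, so at `x = k` and `w = -1/z` the series equals
`e^{-1/z} 4⁻ⁿ ∑ a(n,j) (2/z)ᵗ = e^{-1/z} (2z)⁻ⁿ Yₙ⁰(z)`.
-/

open Finset

def besselCoeff (n j : ℕ) : ℕ := n.choose j * (n + 1).ascFactorial j

@[simp]
theorem besselCoeff_zero_right (n : ℕ) : besselCoeff n 0 = 1 := by
  simp [besselCoeff]

theorem besselCoeff_of_lt {n j : ℕ} (h : n < j) : besselCoeff n j = 0 := by
  simp [besselCoeff, Nat.choose_eq_zero_of_lt h]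

theorem besselCoeff_succ_succ (n j : ℕ) :
    besselCoeff (n + 1) (j + 1) = besselCoeff n (j + 1) + 2 * (n + j + 1) * besselCoeff n j := by
  rcases lt_or_ge n j with hnj | hjn
  · simp [besselCoeff_of_lt, hnj, Nat.lt_add_right 1 hnj]
  obtain ⟨m, rfl⟩ := Nat.exists_eq_add_of_le hjn
  have hshift := Nat.succ_ascFactorial (j + m + 1) j
  have hchoose := Nat.choose_succ_right_eq (j + m) j
  rw [Nat.add_sub_cancel_left] at hchoose
  apply Nat.eq_of_mul_eq_mul_left (Nat.succ_pos (j + m))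
  simp only [besselCoeff, Nat.choose_succ_succ', Nat.ascFactorial_succ, Nat.succ_eq_add_one]
    at hshift ⊢
  zify at hshift hchoose ⊢
  linear_combination
    ((j + m : ℤ) + 1 + j + 1) * ((j + m).choose j + (j + m).choose (j + 1) : ℤ) * hshift
      + ((j + m + 1 + j : ℤ) * (j + m + 1).ascFactorial j) * hchoose

theorem four_pow_mul_ascPochhammer_eval_eq_sum_descPochhammer {R : Type*} [CommRing R]
    (n : ℕ) (y : R) :
    4 ^ n * (ascPochhammer R n).eval y = ∑ p ∈ antidiagonal n,
      (besselCoeff n p.1 : R) * (-2) ^ p.2 * (descPochhammer R p.2).eval (1 - 2 * y) := by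
  induction n with
  | zero => simp
  | succ n ih =>
    set f : ℕ → ℕ × ℕ → R := fun n p =>
      (besselCoeff n p.1 : R) * (-2) ^ p.2 * (descPochhammer R p.2).eval (1 - 2 * y) with hf
    have hterm : ∀ p ∈ antidiagonal n,
        f n p * (4 * (y + n)) = f n (p.1, p.2 + 1) + 2 * (n + p.1 + 1) * f n p := by
      rintro ⟨j, t⟩ hp
      have hn : (n : R) = j + t := by
        rw [← HasAntidiagonal.mem_antidiagonal.1 hp]; push_cast; rfl
      simp only [hf, descPochhammer_succ_eval, hn]
      ring
    have hshift : ∑ p ∈ antidiagonal n, f n (p.1, p.2 + 1)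
        = f n (0, n + 1) + ∑ p ∈ antidiagonal n, f n (p.1 + 1, p.2) := by
      rw [← Nat.sum_antidiagonal_succ, Nat.sum_antidiagonal_succ']
      simp [hf, besselCoeff_of_lt]
    calc 4 ^ (n + 1) * (ascPochhammer R (n + 1)).eval y
        = (∑ p ∈ antidiagonal n, f n p) * (4 * (y + n)) := by
          rw [ascPochhammer_succ_eval, ← ih]; ring
      _ = ∑ p ∈ antidiagonal n, f n (p.1, p.2 + 1)
            + ∑ p ∈ antidiagonal n, 2 * (n + p.1 + 1) * f n p := by
          rw [sum_mul, sum_congr rfl hterm, sum_add_distrib]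
      _ = ∑ p ∈ antidiagonal (n + 1), f (n + 1) p := by
          rw [hshift, Nat.sum_antidiagonal_succ, add_assoc, ← sum_add_distrib]
          congr 1
          · simp [hf]
          · refine sum_congr rfl fun p _ => ?_
            simp only [hf, besselCoeff_succ_succ]
            push_cast
            ring

theorem hasSum_pow_div_factorial_mul_descFactorial (w : ℂ) (t : ℕ) :
    HasSum (fun k : ℕ => w ^ k / k.factorial * k.descFactorial t) (w ^ t * Complex.exp w) := by
  rw [← hasSum_nat_add_iff' t, sub_eq_self.2 (sum_eq_zero fun k hk => by
    simp [Nat.descFactorial_eq_zero_iff_lt.2 (mem_range.1 hk)])]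
  have hterm : ∀ m : ℕ, w ^ (m + t) / (m + t).factorial * (m + t).descFactorial t
      = w ^ t * (w ^ m / m.factorial) := fun m => by
    rw [Nat.add_descFactorial_eq_ascFactorial, ← Nat.factorial_mul_ascFactorial m t]
    have : ((m + 1).ascFactorial t : ℂ) ≠ 0 := Nat.cast_ne_zero.2 (Nat.ascFactorial_pos _ _).ne'
    push_cast
    field_simp
    ring
  simp only [hterm]
  rw [Complex.exp_eq_exp_ℂ]
  exact (NormedSpace.expSeries_div_hasSum_exp w).mul_left (w ^ t)

theorem hasSum_pow_div_factorial_mul_ascPochhammer_eval (n : ℕ) (w : ℂ) :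
    HasSum (fun k : ℕ => w ^ k / k.factorial * (ascPochhammer ℂ n).eval (1 / 2 - k / 2 : ℂ))
      (Complex.exp w / 4 ^ n * ∑ p ∈ antidiagonal n, (besselCoeff n p.1 : ℂ) * (-2 * w) ^ p.2) := by
  have hexpand : ∀ k : ℕ, w ^ k / k.factorial * (ascPochhammer ℂ n).eval (1 / 2 - k / 2 : ℂ)
      = (4 ^ n)⁻¹ * ∑ p ∈ antidiagonal n, (besselCoeff n p.1 : ℂ) * (-2) ^ p.2 *
          (w ^ k / k.factorial * k.descFactorial p.2) := fun k => by
    have h := four_pow_mul_ascPochhammer_eval_eq_sum_descPochhammer n (1 / 2 - k / 2 : ℂ)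
    rw [show (1 : ℂ) - 2 * (1 / 2 - k / 2) = k by ring] at h
    simp only [descPochhammer_eval_eq_descFactorial] at h
    rw [eq_inv_mul_iff_mul_eq₀ (by norm_num), mul_left_comm, h, mul_sum]
    exact sum_congr rfl fun p _ => by ring
  have hval : (4 ^ n)⁻¹ * ∑ p ∈ antidiagonal n,
      (besselCoeff n p.1 : ℂ) * (-2) ^ p.2 * (w ^ p.2 * Complex.exp w)
      = Complex.exp w / 4 ^ n * ∑ p ∈ antidiagonal n, (besselCoeff n p.1 : ℂ) * (-2 * w) ^ p.2 := by
    rw [mul_sum, mul_sum]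
    exact sum_congr rfl fun p _ => by ring
  rw [funext hexpand, ← hval]
  exact (hasSum_sum fun p _ => (hasSum_pow_div_factorial_mul_descFactorial w p.2).mul_left
    ((besselCoeff n p.1 : ℂ) * (-2) ^ p.2)).mul_left _

theorem genBessel_zero_eq_sum_antidiagonal (n : ℕ) (z : ℂ) :
    genBessel n 0 z = ∑ p ∈ antidiagonal n, (besselCoeff n p.1 : ℂ) * (z / 2) ^ p.1 := by
  rw [genBessel, Nat.sum_antidiagonal_eq_sum_range_succ_mk]
  refine sum_congr rfl fun j _ => ?_
  rw [besselCoeff, ← ascPochhammer_nat_eq_ascFactorial]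
  push_cast
  ring_nf

theorem genBessel_zero_eq_mul_sum_antidiagonal (n : ℕ) {z : ℂ} (hz : z ≠ 0) :
    genBessel n 0 z =
      (z / 2) ^ n * ∑ p ∈ antidiagonal n, (besselCoeff n p.1 : ℂ) * (2 / z) ^ p.2 := by
  have hinv : z / 2 * (2 / z) = 1 := by field_simp
  rw [genBessel_zero_eq_sum_antidiagonal, mul_sum]
  refine sum_congr rfl fun p hp => ?_
  rw [← HasAntidiagonal.mem_antidiagonal.1 hp, pow_add]
  calc _ = (besselCoeff (p.1 + p.2) p.1 : ℂ) * (z / 2) ^ p.1 * (z / 2 * (2 / z)) ^ p.2 := by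
        rw [hinv, one_pow, mul_one]
    _ = _ := by rw [mul_pow]; ring

theorem genBessel_zero_series (n : ℕ) (z : ℂ) (hz : z ≠ 0) :
    genBessel n 0 z =
      (2 * z) ^ n * Complex.exp (1 / z) *
        ∑' k : ℕ, ((-1 : ℂ) ^ k / ((k.factorial : ℂ) * z ^ k)) *
          (ascPochhammer ℂ n).eval ((1 : ℂ) / 2 - (k : ℂ) / 2) := by
  have hcoeff : ∀ k : ℕ, (-1 : ℂ) ^ k / ((k.factorial : ℂ) * z ^ k) = (-1 / z) ^ k / k.factorial :=
    fun k => by rw [div_pow]; ring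
  have hexp : Complex.exp (1 / z) * Complex.exp (-1 / z) = 1 := by
    rw [← Complex.exp_add, ← add_div, add_neg_cancel, zero_div, Complex.exp_zero]
  simp only [hcoeff]
  rw [(hasSum_pow_div_factorial_mul_ascPochhammer_eval n (-1 / z)).tsum_eq,
    genBessel_zero_eq_mul_sum_antidiagonal n hz, show -2 * (-1 / z) = 2 / z by ring]
  set S := ∑ p ∈ antidiagonal n, (besselCoeff n p.1 : ℂ) * (2 / z) ^ p.2
  calc (z / 2) ^ n * S = (2 * z / 4) ^ n * (Complex.exp (1 / z) * Complex.exp (-1 / z)) * S := by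
        rw [hexp]; ring_nf
    _ = _ := by rw [div_pow]; ring
end

section
/- For x > 0 and n a natural number, Y_n^0(-x) = \sqrt{2/(\pi x)} e^{-1/x} \left( (-1)^n K_{n+1/2}(1/x) + \pi I_{n+1/2}(1/x) \right), where I and K are the modified Bessel functions. -/
open Finset

/-- Modified Bessel function of the second kind of half-integer order (real argument):
`K_{n+1/2}(x) = √(π/(2x)) e^{-x} ∑_{k=0}^n (n+k)!/(k!(n-k)!) (2x)^{-k}`. -/
noncomputable def besselKhalf (n : ℕ) (x : ℝ) : ℝ :=
  Real.sqrt (Real.pi / (2 * x)) * Real.exp (-x) *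
    ∑ k ∈ Finset.range (n + 1),
      ((n + k).factorial : ℝ) / ((k.factorial : ℝ) * ((n - k).factorial : ℝ)) / (2 * x) ^ k

/-- Modified Bessel function of the first kind of order `n+1/2` (real argument `x > 0`),
defined by its power series `I_ν(x) = ∑_{m≥0} (x/2)^{2m+ν} / (m! Γ(m+ν+1))`. -/
noncomputable def besselIhalf (n : ℕ) (x : ℝ) : ℝ :=
  ∑' m : ℕ, (x / 2) ^ ((2 * m : ℝ) + (n + 1 / 2)) /
    ((m.factorial : ℝ) * Real.Gamma ((m : ℝ) + (n + 1 / 2) + 1))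

/-!
Both `K_{n+1/2}` and `I_{n+1/2}` are elementary: with `θ_n` the reverse Bessel polynomial,
`K_{n+1/2}(y)` is a multiple of `e^{-y} θ_n(y)`, and `I_{n+1/2}(y)` is a multiple of
`R_n(y) = (-1)^n (e^y θ_n(-y) - e^{-y} θ_n(y))`. In the combination `(-1)^n K + π I` the
`e^{-y} θ_n(y)` terms cancel, leaving `e^y θ_n(-y)`; since `θ_n` is the reverse of the Bessel
polynomial `Y_n^0`, at `y = 1/x` this is `Y_n^0(-x)` up to the prefactor.

The closed form of `I_{n+1/2}` is checked against its power series: `θ_n` satisfies a three-term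
recurrence, hence so does `R_n`, and the series coefficients satisfy the same recurrence after a
shift of the summation index by one; the cases `n = 0, 1` are the series of `sinh` and `cosh`.
-/

open Real
open scoped Nat

theorem HasSum.nat_succ_of_eq_zero {α : Type*} [AddCommGroup α] [TopologicalSpace α]
    [IsTopologicalAddGroup α] {f : ℕ → α} {a : α} (h : HasSum f a) (h0 : f 0 = 0) :
    HasSum (fun m => f (m + 1)) a := by
  simpa [h0] using (hasSum_nat_add_iff' 1).mpr h

theorem choose_mul_ascFactorial_eq {K : Type*} [Field K] [CharZero K] {n k : ℕ} (hk : k ≤ n) :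
    (n.choose k : K) * (n + 1).ascFactorial k = (n + k)! / (k ! * (n - k)!) := by
  have h : (n ! : K) * (n + 1).ascFactorial k = (n + k)! := mod_cast Nat.factorial_mul_ascFactorial n k
  rw [Nat.cast_choose K hk, ← h]
  field_simp

theorem genBessel_zero_s17 (n : ℕ) (z : ℂ) :
    genBessel n 0 z = ∑ k ∈ range (n + 1), ((n + k)! / (k ! * (n - k)!) : ℂ) * (z / 2) ^ k := by
  refine sum_congr rfl fun k hk => ?_
  rw [add_zero, ← Nat.cast_succ, ← Nat.cast_ascFactorial,
    choose_mul_ascFactorial_eq (Nat.lt_succ_iff.mp (mem_range.mp hk))]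

theorem Real.Gamma_nat_add_one_add_half_eq_factorial (k : ℕ) :
    Gamma (k + 1 + 1 / 2) = (2 * k + 1)! * √π / (k ! * 2 ^ (2 * k + 1)) := by
  have h := Gamma_mul_Gamma_add_half (k + 1)
  have h2 : (2 : ℝ) * (k + 1) = (2 * k + 1 : ℕ) + 1 := by push_cast; ring
  have h3 : (1 : ℝ) - 2 * (k + 1) = -((2 * k + 1 : ℕ) : ℝ) := by push_cast; ring
  rw [h3, h2, Gamma_nat_eq_factorial, Gamma_nat_eq_factorial, rpow_neg two_pos.le,
    rpow_natCast] at h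
  field_simp at h ⊢
  linear_combination h

noncomputable def revBesselCoeff (n i : ℕ) : ℝ := (2 * n - i)! / ((n - i)! * i !)

/-- `revBessel n t = 2 ^ n θ_n(t)`, where `θ_n` is the reverse Bessel polynomial. -/
noncomputable def revBessel (n : ℕ) (t : ℝ) : ℝ :=
  ∑ i ∈ range (n + 1), revBesselCoeff n i * (2 * t) ^ i

theorem revBessel_zero (t : ℝ) : revBessel 0 t = 1 := by
  simp [revBessel, revBesselCoeff]

theorem revBessel_one (t : ℝ) : revBessel 1 t = 2 + 2 * t := by
  norm_num [revBessel, revBesselCoeff, sum_range_succ]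

theorem revBesselCoeff_self (n : ℕ) : revBesselCoeff n n = 1 := by
  simp [revBesselCoeff, two_mul, Nat.factorial_ne_zero]

theorem revBesselCoeff_add_two_of_lt_two (n : ℕ) {i : ℕ} (hi : i < 2) :
    revBesselCoeff (n + 2) i = 2 * (2 * n + 3) * revBesselCoeff (n + 1) i := by
  simp only [revBesselCoeff]
  rw [show 2 * (n + 2) - i = 2 * n + 2 - i + 1 + 1 by omega,
    show n + 2 - i = n + 1 - i + 1 by omega, show 2 * (n + 1) - i = 2 * n + 2 - i by omega]
  push_cast [Nat.factorial_succ]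
  field_simp
  interval_cases i <;> push_cast [Nat.sub_zero] <;> ring

theorem revBesselCoeff_add_two_add_two {n i : ℕ} (hi : i < n) :
    revBesselCoeff (n + 2) (i + 2) =
      revBesselCoeff n i + 2 * (2 * n + 3) * revBesselCoeff (n + 1) (i + 2) := by
  obtain ⟨d, rfl⟩ : ∃ d, n = i + d + 1 := ⟨n - i - 1, by omega⟩
  simp only [revBesselCoeff]
  rw [show 2 * (i + d + 1 + 2) - (i + 2) = i + 2 * d + 2 + 1 + 1 by omega,
    show i + d + 1 + 2 - (i + 2) = d + 1 by omega,
    show 2 * (i + d + 1) - i = i + 2 * d + 2 by omega,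
    show i + d + 1 - i = d + 1 by omega,
    show 2 * (i + d + 1 + 1) - (i + 2) = i + 2 * d + 2 by omega,
    show i + d + 1 + 1 - (i + 2) = d by omega]
  push_cast [Nat.factorial_succ]
  field_simp
  ring

theorem revBessel_add_two (n : ℕ) (t : ℝ) :
    revBessel (n + 2) t = 4 * t ^ 2 * revBessel n t + 2 * (2 * n + 3) * revBessel (n + 1) t := by
  have split_low (N : ℕ) (f : ℕ → ℝ) :
      ∑ i ∈ range (N + 2), f i = ∑ i ∈ range N, f (i + 2) + f 1 + f 0 := by
    rw [sum_range_succ', sum_range_succ']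
  have middle : ∑ i ∈ range n, revBesselCoeff (n + 2) (i + 2) * (2 * t) ^ (i + 2) =
      ∑ i ∈ range n, (4 * t ^ 2 * (revBesselCoeff n i * (2 * t) ^ i) +
        2 * (2 * n + 3) * (revBesselCoeff (n + 1) (i + 2) * (2 * t) ^ (i + 2))) := by
    refine sum_congr rfl fun i hi => ?_
    rw [revBesselCoeff_add_two_add_two (mem_range.mp hi)]
    ring
  rw [revBessel, revBessel, revBessel, split_low, split_low, sum_range_succ, sum_range_succ,
    middle, sum_add_distrib, revBesselCoeff_self, revBesselCoeff_self,
    revBesselCoeff_add_two_of_lt_two n (by norm_num : 0 < 2),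
    revBesselCoeff_add_two_of_lt_two n (by norm_num : 1 < 2), ← mul_sum, ← mul_sum]
  ring

theorem sum_div_pow_eq_revBessel (n : ℕ) {t : ℝ} (ht : t ≠ 0) :
    ∑ k ∈ range (n + 1), ((n + k)! / (k ! * (n - k)!) : ℝ) / (2 * t) ^ k =
      revBessel n t / (2 * t) ^ n := by
  have h2t : 2 * t ≠ 0 := mul_ne_zero two_ne_zero ht
  rw [eq_div_iff (pow_ne_zero n h2t), sum_mul, revBessel, ← sum_range_reflect]
  refine sum_congr rfl fun k hk => ?_
  have hk : k ≤ n := Nat.lt_succ_iff.mp (mem_range.mp hk)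
  rw [revBesselCoeff, show n + 1 - 1 - k = n - k by omega, show n + (n - k) = 2 * n - k by omega,
    show n - (n - k) = k by omega, ← Nat.sub_add_cancel hk, pow_add, Nat.sub_add_cancel hk]
  field_simp

noncomputable def besselIhalfNum (n : ℕ) (y : ℝ) : ℝ :=
  (-1) ^ n * (exp y * revBessel n (-y) - exp (-y) * revBessel n y)

theorem besselIhalfNum_add_two (n : ℕ) (y : ℝ) :
    besselIhalfNum (n + 2) y =
      4 * y ^ 2 * besselIhalfNum n y - 2 * (2 * n + 3) * besselIhalfNum (n + 1) y := by
  simp only [besselIhalfNum, revBessel_add_two, pow_succ]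
  ring

noncomputable def besselIhalfNumTerm (n : ℕ) (y : ℝ) (m : ℕ) : ℝ :=
  (m + n)! / (m ! * (2 * m + 2 * n + 1)!) * (2 * y) ^ (2 * n + 1) * y ^ (2 * m)

theorem besselIhalfNumTerm_add_two (n : ℕ) (y : ℝ) (m : ℕ) :
    besselIhalfNumTerm (n + 2) y m =
      4 * y ^ 2 * besselIhalfNumTerm n y (m + 1) -
        2 * (2 * n + 3) * besselIhalfNumTerm (n + 1) y (m + 1) := by
  simp only [besselIhalfNumTerm]
  rw [show m + (n + 2) = m + n + 1 + 1 by ring, show m + 1 + (n + 1) = m + n + 1 + 1 by ring,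
    show 2 * m + 2 * (n + 2) + 1 = 2 * (m + 1) + 2 * n + 1 + 1 + 1 by ring,
    show 2 * (m + 1) + 2 * (n + 1) + 1 = 2 * (m + 1) + 2 * n + 1 + 1 + 1 by ring,
    show m + 1 + n = m + n + 1 by ring]
  push_cast [Nat.factorial_succ]
  field_simp
  ring

theorem besselIhalfNumTerm_zero_sub (n : ℕ) (y : ℝ) :
    4 * y ^ 2 * besselIhalfNumTerm n y 0 - 2 * (2 * n + 3) * besselIhalfNumTerm (n + 1) y 0 = 0 := by
  simp only [besselIhalfNumTerm, zero_add, mul_zero]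
  rw [show 2 * (n + 1) + 1 = 2 * n + 1 + 1 + 1 by ring]
  push_cast [Nat.factorial_succ]
  field_simp
  ring

theorem hasSum_besselIhalfNumTerm (n : ℕ) (y : ℝ) :
    HasSum (besselIhalfNumTerm n y) (besselIhalfNum n y) := by
  induction n using Nat.twoStepInduction with
  | zero =>
    have hterm : besselIhalfNumTerm 0 y = fun m => 2 * (y ^ (2 * m + 1) / (2 * m + 1)!) := by
      ext m
      simp only [besselIhalfNumTerm, add_zero, mul_zero]
      push_cast [Nat.factorial_succ]
      field_simp
      ring
    have hsum : besselIhalfNum 0 y = 2 * sinh y := by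
      rw [besselIhalfNum, revBessel_zero, revBessel_zero, sinh_eq]
      ring
    rw [hterm, hsum]
    exact (hasSum_sinh y).mul_left 2
  | one =>
    have hterm : besselIhalfNumTerm 1 y = fun m =>
        4 * y * (y ^ (2 * (m + 1)) / (2 * (m + 1))!) -
          4 * (y ^ (2 * (m + 1) + 1) / (2 * (m + 1) + 1)!) := by
      ext m
      simp only [besselIhalfNumTerm]
      rw [show 2 * (m + 1) = 2 * m + 1 + 1 by ring]
      push_cast [Nat.factorial_succ]
      field_simp
      ring
    have hsum : besselIhalfNum 1 y = 4 * y * cosh y - 4 * sinh y := by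
      rw [besselIhalfNum, revBessel_one, revBessel_one, cosh_eq, sinh_eq]
      ring
    rw [hterm, hsum]
    exact (((hasSum_cosh y).mul_left (4 * y)).sub ((hasSum_sinh y).mul_left 4)).nat_succ_of_eq_zero
      (by simp)
  | more n ih₀ ih₁ =>
    have h := (ih₀.mul_left (4 * y ^ 2)).sub (ih₁.mul_left (2 * (2 * (n : ℝ) + 3)))
    rw [besselIhalfNum_add_two, funext (besselIhalfNumTerm_add_two n y)]
    exact h.nat_succ_of_eq_zero (besselIhalfNumTerm_zero_sub n y)

theorem besselIhalf_eq_besselIhalfNum_div (n : ℕ) {y : ℝ} (hy : 0 < y) :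
    besselIhalf n y = besselIhalfNum n y / (√(2 * π * y) * (2 * y) ^ n) := by
  rw [besselIhalf, ← ((hasSum_besselIhalfNumTerm n y).div_const _).tsum_eq]
  refine tsum_congr fun m => ?_
  have hpow : (y / 2) ^ ((2 * m : ℝ) + (n + 1 / 2)) = (y / 2) ^ (2 * m + n) * √(y / 2) := by
    rw [show (2 * m : ℝ) + (n + 1 / 2) = (2 * m + n : ℕ) + 1 / 2 by push_cast; ring,
      rpow_add (by positivity), rpow_natCast, sqrt_eq_rpow]
  have hgamma : Gamma (m + (n + 1 / 2) + 1) =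
      (2 * (m + n) + 1)! * √π / ((m + n)! * 2 ^ (2 * (m + n) + 1)) := by
    rw [show (m : ℝ) + (n + 1 / 2) + 1 = (m + n : ℕ) + 1 + 1 / 2 by push_cast; ring]
    exact Gamma_nat_add_one_add_half_eq_factorial _
  have hsqrt : √(2 * π * y) = 2 * √π * √(y / 2) := by
    rw [show 2 * π * y = 2 ^ 2 * π * (y / 2) by ring, sqrt_mul (by positivity),
      sqrt_mul (by positivity), sqrt_sq two_pos.le]
  have hy2 : √(y / 2) ^ 2 = y / 2 := sq_sqrt (by positivity)
  rw [hpow, hgamma, hsqrt, besselIhalfNumTerm]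
  field_simp
  rw [hy2, show 2 * (m + n) + 1 = 2 * m + 2 * n + 1 by ring, div_pow]
  field_simp
  ring

theorem genBessel_zero_neg_ofReal (n : ℕ) {x : ℝ} (hx : x ≠ 0) :
    genBessel n 0 (-(x : ℂ)) = ((revBessel n (-(1 / x)) / (2 * -(1 / x)) ^ n : ℝ) : ℂ) := by
  rw [genBessel_zero_s17, ← sum_div_pow_eq_revBessel n (by simpa using hx)]
  push_cast
  refine sum_congr rfl fun k _ => ?_
  rw [div_eq_mul_inv _ ((2 * -(1 / (x : ℂ))) ^ k), ← inv_pow]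
  congr 2
  field_simp

theorem besselKhalf_eq_revBessel (n : ℕ) {y : ℝ} (hy : y ≠ 0) :
    besselKhalf n y = √(π / (2 * y)) * exp (-y) * (revBessel n y / (2 * y) ^ n) := by
  rw [besselKhalf, sum_div_pow_eq_revBessel n hy]

theorem genBessel_zero_neg_arg (n : ℕ) (x : ℝ) (hx : 0 < x) :
    genBessel n 0 (-(x : ℂ)) =
      ((Real.sqrt (2 / (Real.pi * x)) * Real.exp (-(1 / x)) *
          ((-1 : ℝ) ^ n * besselKhalf n (1 / x) + Real.pi * besselIhalf n (1 / x)) : ℝ) : ℂ) := by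
  rw [genBessel_zero_neg_ofReal n hx.ne']
  set y := 1 / x with hy_def
  have hy : 0 < y := by positivity
  have hK_factor : √(π / (2 * y)) = (√(2 / (π * x)))⁻¹ := by
    rw [← sqrt_inv, inv_div, hy_def]
    field_simp
  have hI_factor : √(2 * π * y) = √(2 / (π * x)) * π := by
    rw [← sqrt_sq pi_pos.le, ← sqrt_mul (by positivity), sqrt_sq pi_pos.le, hy_def]
    field_simp
  rw [besselKhalf_eq_revBessel n hy.ne', besselIhalf_eq_besselIhalfNum_div n hy, besselIhalfNum,
    hK_factor, hI_factor, mul_neg, neg_pow, show exp y = (exp (-y))⁻¹ by rw [exp_neg, inv_inv]]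
  congr 1
  field_simp
  rw [← pow_mul, pow_mul', neg_one_sq, one_pow]
  ring
end
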